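/- Let n, m ≥ 1 and let E ⊆ {1, …, n} × {1, …, m} be a bipartite edge set, and consider the binary alphabet {0, 1} and the finite language L = { 0^i · 1 · 1 · 0^j : (i, j) ∈ E }. If E admits a biclique cover of size k, then there exists a nondeterministic finite automaton M over {0, 1} with a finite state type of cardinality at most 2 + n + m + k whose SSB(1)-language is exactly L. -/

import Mathlib

/-- `RunFrom M q w ps` means: starting in state `q`, the list of states `ps` is a run of
`M` on the word `w` ending in an accepting state. -/
def RunFrom {α σ : Type*} (M : NFA α σ) : σ → List α → List σ → Prop
  | q, [], [] => q ∈ M.accept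
  | q, a :: w, p :: ps => p ∈ M.step q a ∧ RunFrom M p w ps
  | _, _ :: _, [] => False
  | _, [], _ :: _ => False

/-- `ps` is an accepting run of `M` on the word `w`. -/
def IsAcceptingRun {α σ : Type*} (M : NFA α σ) (w : List α) (ps : List σ) : Prop :=
  ∃ p rest, ps = p :: rest ∧ p ∈ M.start ∧ RunFrom M p w rest

/-- The SSB(1)-language of `M`: words having an accepting run with pairwise
distinct states. -/
def SSB1Lang {α σ : Type*} (M : NFA α σ) : Language α :=
  {w | ∃ ps, IsAcceptingRun M w ps ∧ ps.Nodup}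

/-- A biclique cover of size `k` of a bipartite edge set `E ⊆ V₁ × V₂`. -/
def BicliqueCover {V₁ V₂ : Type*} (E : Set (V₁ × V₂)) (k : ℕ) : Prop :=
  ∃ (A : Fin k → Set V₁) (B : Fin k → Set V₂),
    (∀ r, A r ×ˢ B r ⊆ E) ∧ ∀ e ∈ E, ∃ r, e ∈ A r ×ˢ B r

/-- The word `0^i · 1 · 1 · 0^j` over the binary alphabet (0 = `false`, 1 = `true`). -/
def zioz (i j : ℕ) : List Bool :=
  List.replicate i false ++ [true, true] ++ List.replicate j false

/-!
The automaton counts the leading zeros on a chain of `n` states; the first `1` leads from the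
state that has counted `i` zeros to any biclique `r` with `i ∈ A r`, the second `1` from `r` to a
countdown state accepting exactly `0^j`, for any `j ∈ B r`. So it accepts the words `zioz i j`
with `(i, j) ∈ ⋃ r, A r ×ˢ B r = E`, using `2 + n + m + k` states. Every transition strictly
increases a rank, so all runs have pairwise distinct states and the SSB(1)-language is just the
ordinary language of the automaton.
-/

namespace NFA

variable {α σ : Type*} (M : NFA α σ)

theorem mem_acceptsFrom_iff_exists_singleton {S : Set σ} {x : List α} :
    x ∈ M.acceptsFrom S ↔ ∃ s ∈ S, x ∈ M.acceptsFrom {s} := by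
  simp only [mem_acceptsFrom, mem_evalFrom_iff_exists (S := S)]
  exact ⟨fun ⟨s, hs, t, ht, h⟩ => ⟨t, ht, s, hs, h⟩, fun ⟨t, ht, s, hs, h⟩ => ⟨s, hs, t, ht, h⟩⟩

theorem cons_mem_acceptsFrom_singleton {q : σ} {a : α} {x : List α} :
    a :: x ∈ M.acceptsFrom {q} ↔ ∃ p ∈ M.step q a, x ∈ M.acceptsFrom {p} := by
  rw [cons_mem_acceptsFrom, stepSet_singleton, mem_acceptsFrom_iff_exists_singleton]

def reindex {τ : Type*} (e : σ ≃ τ) : NFA α τ where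
  step q a := e.symm ⁻¹' M.step (e.symm q) a
  start := e.symm ⁻¹' M.start
  accept := e.symm ⁻¹' M.accept

end NFA

section Runs

variable {α σ : Type*} (M : NFA α σ)

theorem exists_runFrom_iff_mem_acceptsFrom {q : σ} {w : List α} :
    (∃ ps, RunFrom M q w ps) ↔ w ∈ M.acceptsFrom {q} := by
  induction w generalizing q with
  | nil =>
    refine ⟨fun ⟨ps, h⟩ => ?_, fun h => ⟨[], by simpa [RunFrom] using h⟩⟩
    cases ps with
    | nil => simpa [RunFrom] using h
    | cons => exact h.elim
  | cons a w ih =>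
    rw [M.cons_mem_acceptsFrom_singleton]
    simp only [← ih]
    constructor
    · rintro ⟨_ | ⟨p, ps⟩, h⟩
      · exact h.elim
      · exact ⟨p, h.1, ps, h.2⟩
    · rintro ⟨p, hp, ps, h⟩
      exact ⟨p :: ps, hp, h⟩

theorem exists_isAcceptingRun_iff_mem_accepts {w : List α} :
    (∃ ps, IsAcceptingRun M w ps) ↔ w ∈ M.accepts := by
  rw [NFA.accepts_eq_acceptsFrom_start, M.mem_acceptsFrom_iff_exists_singleton]
  simp only [IsAcceptingRun, ← exists_runFrom_iff_mem_acceptsFrom]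
  constructor
  · rintro ⟨_, p, rest, rfl, hp, h⟩
    exact ⟨p, hp, rest, h⟩
  · rintro ⟨p, hp, rest, h⟩
    exact ⟨_, p, rest, rfl, hp, h⟩

section Rank

variable {β : Type*} [Preorder β] {ρ : σ → β}

theorem RunFrom.isChain_map_rank (hρ : ∀ p a q, q ∈ M.step p a → ρ p < ρ q)
    {p : σ} {w : List α} {ps : List σ} (h : RunFrom M p w ps) :
    ((p :: ps).map ρ).IsChain (· < ·) := by
  induction w generalizing p ps with
  | nil =>
    cases ps with
    | nil => simp
    | cons => exact h.elim
  | cons a w ih =>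
    cases ps with
    | nil => exact h.elim
    | cons q ps => exact List.isChain_cons_cons.2 ⟨hρ p a q h.1, ih h.2⟩

theorem ssb1Lang_eq_accepts_of_rank (hρ : ∀ p a q, q ∈ M.step p a → ρ p < ρ q) :
    SSB1Lang M = M.accepts := by
  ext w
  refine ⟨fun ⟨ps, h, _⟩ => (exists_isAcceptingRun_iff_mem_accepts M).1 ⟨ps, h⟩, fun hw => ?_⟩
  obtain ⟨_, p, rest, rfl, hp, h⟩ := (exists_isAcceptingRun_iff_mem_accepts M).2 hw
  exact ⟨_, ⟨p, rest, rfl, hp, h⟩, (h.isChain_map_rank M hρ).pairwise.nodup.of_map ρ⟩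

end Rank

section Reindex

variable {τ : Type*} (e : σ ≃ τ)

theorem runFrom_reindex_iff {q : τ} {w : List α} {ps : List τ} :
    RunFrom (M.reindex e) q w ps ↔ RunFrom M (e.symm q) w (ps.map e.symm) := by
  induction w generalizing q ps with
  | nil => cases ps <;> simp [RunFrom, NFA.reindex]
  | cons a w ih =>
    cases ps with
    | nil => exact Iff.rfl
    | cons p ps => exact and_congr Iff.rfl ih

theorem ssb1Lang_reindex : SSB1Lang (M.reindex e) = SSB1Lang M := by
  ext w
  constructor
  · rintro ⟨_, ⟨p, rest, rfl, hp, h⟩, hnd⟩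
    exact ⟨_, ⟨e.symm p, rest.map e.symm, rfl, hp, (runFrom_reindex_iff M e).1 h⟩,
      hnd.map e.symm.injective⟩
  · rintro ⟨_, ⟨p, rest, rfl, hp, h⟩, hnd⟩
    exact ⟨_, ⟨e p, rest.map e, rfl, by simpa [NFA.reindex] using hp,
      (runFrom_reindex_iff M e).2 (by simpa using h)⟩, hnd.map e.injective⟩

end Reindex

end Runs

theorem zioz_zero (j : ℕ) : zioz 0 j = true :: true :: List.replicate j false := rfl

theorem zioz_succ (i j : ℕ) : zioz (i + 1) j = false :: zioz i j := rfl

theorem zioz_ne_nil (i j : ℕ) : zioz i j ≠ [] := by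
  cases i <;> simp [zioz_zero, zioz_succ]

theorem true_cons_eq_zioz_iff {x : List Bool} {d j : ℕ} :
    true :: x = zioz d j ↔ d = 0 ∧ x = true :: List.replicate j false := by
  cases d <;> simp [zioz_zero, zioz_succ, eq_comm]

theorem false_cons_eq_zioz_iff {x : List Bool} {d j : ℕ} :
    false :: x = zioz d j ↔ ∃ d', d = d' + 1 ∧ x = zioz d' j := by
  cases d <;> simp [zioz_zero, zioz_succ]

/-- `pre i` is reached after `i + 1` leading zeros, `post j` still has to read `j + 1` zeros. -/
inductive CoverState (n m k : ℕ)
  | init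
  | pre (i : Fin n)
  | clique (r : Fin k)
  | post (j : Fin m)
  | final

namespace CoverState

variable {n m k : ℕ}

def equivSum : CoverState n m k ≃ Unit ⊕ Fin n ⊕ Fin k ⊕ Fin m ⊕ Unit where
  toFun
    | init => .inl ()
    | pre i => .inr (.inl i)
    | clique r => .inr (.inr (.inl r))
    | post j => .inr (.inr (.inr (.inl j)))
    | final => .inr (.inr (.inr (.inr ())))
  invFun
    | .inl _ => init
    | .inr (.inl i) => pre i
    | .inr (.inr (.inl r)) => clique r
    | .inr (.inr (.inr (.inl j))) => post j
    | .inr (.inr (.inr (.inr _))) => final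
  left_inv := by rintro (_ | _ | _ | _ | _) <;> rfl
  right_inv := by rintro (_ | _ | _ | _ | _) <;> rfl

noncomputable def equivFin : CoverState n m k ≃ Fin (2 + n + m + k) :=
  equivSum.trans <| Fintype.equivFinOfCardEq <| by
    simp only [Fintype.card_sum, Fintype.card_unit, Fintype.card_fin]
    omega

def rank : CoverState n m k → ℕ
  | init => 0
  | pre i => i + 1
  | clique _ => n + 1
  | post j => n + 1 + (m - j)
  | final => n + m + 2

end CoverState

section Construction

open CoverState

variable {n m k : ℕ} (A B : Fin k → Set ℕ)

def coverStep : CoverState n m k → Bool → Set (CoverState n m k)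
  | init, false => {q | ∃ i : Fin n, i.val = 0 ∧ q = pre i}
  | pre i, false => {q | ∃ i' : Fin n, i'.val = i + 1 ∧ q = pre i'}
  | pre i, true => {q | ∃ r, i.val + 1 ∈ A r ∧ q = clique r}
  | clique r, true => {q | ∃ j : Fin m, j.val + 1 ∈ B r ∧ q = post j}
  | post ⟨0, _⟩, false => {final}
  | post ⟨j + 1, h⟩, false => {post ⟨j, by omega⟩}
  | _, _ => ∅

@[simps]
def coverNFA : NFA Bool (CoverState n m k) where
  step := coverStep A B
  start := {init}
  accept := {final}

theorem rank_lt_of_mem_coverNFA_step {p q : CoverState n m k} {a : Bool}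
    (h : q ∈ (coverNFA A B).step p a) : p.rank < q.rank := by
  rcases p with _ | i | r | ⟨_ | j, hj⟩ | _ <;> cases a <;>
    simp [coverStep] at h <;> (try obtain ⟨_, _, rfl⟩ := h) <;> simp [rank] <;> omega

variable {A B}

theorem mem_acceptsFrom_final {x : List Bool} :
    x ∈ (coverNFA A B : NFA Bool (CoverState n m k)).acceptsFrom {final} ↔ x = [] := by
  rcases x with _ | ⟨_ | _, x⟩ <;>
    simp [-NFA.cons_mem_acceptsFrom, NFA.cons_mem_acceptsFrom_singleton, coverStep]

theorem mem_acceptsFrom_post (j : Fin m) {x : List Bool} :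
    x ∈ (coverNFA A B : NFA Bool (CoverState n m k)).acceptsFrom {post j} ↔
      x = List.replicate (j + 1) false := by
  obtain ⟨j, hj⟩ := j
  induction j generalizing x with
  | zero =>
    rcases x with _ | ⟨_ | _, x⟩ <;>
      simp [-NFA.cons_mem_acceptsFrom, NFA.cons_mem_acceptsFrom_singleton, coverStep,
        mem_acceptsFrom_final]
  | succ j ih =>
    rcases x with _ | ⟨_ | _, x⟩ <;>
      simp [-NFA.cons_mem_acceptsFrom, NFA.cons_mem_acceptsFrom_singleton, coverStep, ih,
        List.replicate_succ]

theorem mem_acceptsFrom_clique (r : Fin k) {x : List Bool} :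
    x ∈ (coverNFA A B : NFA Bool (CoverState n m k)).acceptsFrom {clique r} ↔
      ∃ j ∈ B r, j ∈ Set.Icc 1 m ∧ x = true :: List.replicate j false := by
  rcases x with _ | ⟨_ | _, x⟩
  · simp
  · simp [-NFA.cons_mem_acceptsFrom, NFA.cons_mem_acceptsFrom_singleton, coverStep]
  simp only [NFA.cons_mem_acceptsFrom_singleton, coverNFA_step, coverStep, Set.mem_ofPred_eq,
    ↓existsAndEq, and_true, mem_acceptsFrom_post, Set.mem_Icc, List.cons.injEq, true_and]
  constructor
  · rintro ⟨j, hj, rfl⟩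
    exact ⟨j + 1, hj, ⟨by omega, j.isLt⟩, rfl⟩
  · rintro ⟨j, hj, ⟨h1, h2⟩, rfl⟩
    refine ⟨⟨j - 1, by omega⟩, ?_⟩
    simp [Nat.sub_add_cancel h1, hj]

theorem mem_acceptsFrom_pre (i : Fin n) {x : List Bool} :
    x ∈ (coverNFA A B : NFA Bool (CoverState n m k)).acceptsFrom {pre i} ↔
      ∃ r d, i.val + 1 + d ∈ A r ∧ i.val + 1 + d ≤ n ∧
        ∃ j ∈ B r, j ∈ Set.Icc 1 m ∧ x = zioz d j := by
  induction x generalizing i with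
  | nil => simp [zioz_ne_nil]
  | cons a x ih =>
    simp only [NFA.cons_mem_acceptsFrom_singleton, coverNFA_step]
    cases a
    · simp only [coverStep, Set.mem_ofPred_eq, ↓existsAndEq, and_true, ih, Set.mem_Icc,
        false_cons_eq_zioz_iff, true_and]
      constructor
      · rintro ⟨i', hi', r, d, hA, hle, j, hB, hj, rfl⟩
        have hd : i.val + 1 + (d + 1) = i' + 1 + d := by omega
        exact ⟨r, j, d, hd ▸ hA, by omega, hB, hj, rfl⟩
      · rintro ⟨r, j, d, hA, hle, hB, hj, rfl⟩
        have hd : i.val + 1 + (d + 1) = (i.val + 1) + 1 + d := by omega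
        exact ⟨⟨i + 1, by omega⟩, rfl, r, d, hd ▸ hA, by dsimp only; omega, j, hB, hj, rfl⟩
    · simp [coverStep, mem_acceptsFrom_clique, true_cons_eq_zioz_iff]

theorem mem_acceptsFrom_init {x : List Bool} :
    x ∈ (coverNFA A B : NFA Bool (CoverState n m k)).acceptsFrom {init} ↔
      ∃ r, ∃ i ∈ A r, ∃ j ∈ B r, i ∈ Set.Icc 1 n ∧ j ∈ Set.Icc 1 m ∧ x = zioz i j := by
  rcases x with _ | ⟨_ | _, x⟩
  · simp [zioz_ne_nil]
  all_goals simp only [NFA.cons_mem_acceptsFrom_singleton, coverNFA_step]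
  · simp only [coverStep, Set.mem_ofPred_eq, ↓existsAndEq, and_true, mem_acceptsFrom_pre,
      Set.mem_Icc, false_cons_eq_zioz_iff, le_add_iff_nonneg_left, zero_le, Order.add_one_le_iff,
      true_and]
    constructor
    · rintro ⟨i, hi, r, d, hA, hle, j, hB, hj, rfl⟩
      have hd : i.val + 1 + d = d + 1 := by omega
      exact ⟨r, j, d, hd ▸ hA, hB, by omega, hj, rfl⟩
    · rintro ⟨r, j, d, hA, hB, hlt, hj, rfl⟩
      have hd : d + 1 = 0 + 1 + d := by omega
      exact ⟨⟨0, by omega⟩, rfl, r, d, hd ▸ hA, by dsimp only; omega, j, hB, hj, rfl⟩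
  · simp [coverStep, true_cons_eq_zioz_iff]

theorem ssb1Lang_coverNFA :
    SSB1Lang (coverNFA A B : NFA Bool (CoverState n m k)) =
      {w | ∃ r, ∃ i ∈ A r, ∃ j ∈ B r, i ∈ Set.Icc 1 n ∧ j ∈ Set.Icc 1 m ∧ w = zioz i j} := by
  rw [ssb1Lang_eq_accepts_of_rank _ fun _ _ _ => rank_lt_of_mem_coverNFA_step A B]
  ext w
  exact mem_acceptsFrom_init

end Construction

theorem biclique_cover_to_binary_ssb_nfa_general
    (n m : ℕ) (E : Set (ℕ × ℕ))
    (hE : E ⊆ Set.Icc 1 n ×ˢ Set.Icc 1 m) (k : ℕ) (hcov : BicliqueCover E k) :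
    ∃ s ≤ 2 + n + m + k, ∃ M : NFA Bool (Fin s),
      SSB1Lang M = {w | ∃ i j, (i, j) ∈ E ∧ w = zioz i j} := by
  obtain ⟨A, B, hAB, hcovers⟩ := hcov
  refine ⟨_, le_rfl, (coverNFA (n := n) (m := m) A B).reindex CoverState.equivFin, ?_⟩
  rw [ssb1Lang_reindex, ssb1Lang_coverNFA]
  ext w
  constructor
  · rintro ⟨r, i, hi, j, hj, -, -, rfl⟩
    exact ⟨i, j, hAB r ⟨hi, hj⟩, rfl⟩
  · rintro ⟨i, j, hij, rfl⟩
    obtain ⟨r, hi, hj⟩ := hcovers _ hij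
    exact ⟨r, i, hi, j, hj, (hE hij).1, (hE hij).2, rfl⟩

/-- If `E ⊆ {1,…,n} × {1,…,m}` admits a biclique cover of size `k`, then there is an NFA
over the binary alphabet with at most `2 + n + m + k` states whose SSB(1)-language is
exactly `L = { 0^i·1·1·0^j : (i, j) ∈ E }`. -/
theorem biclique_cover_to_binary_ssb_nfa
    (n m : ℕ) (hn : 1 ≤ n) (hm : 1 ≤ m) (E : Set (ℕ × ℕ))
    (hE : E ⊆ Set.Icc 1 n ×ˢ Set.Icc 1 m) (k : ℕ) (hcov : BicliqueCover E k) :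
    ∃ s ≤ 2 + n + m + k, ∃ M : NFA Bool (Fin s),
      SSB1Lang M = {w | ∃ i j, (i, j) ∈ E ∧ w = zioz i j} :=
  biclique_cover_to_binary_ssb_nfa_general n m E hE k hcov
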